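/- Let (G,ψ) be a Γ-gain graph and let H₁, H₂ be connected subgraphs of G with V₀(H₁) = V₀(H₂) = ∅. If H₁ is proper near-balanced, ⟨H₂⟩ ≅ ℤ_p for some prime p, and H₁ ∩ H₂ is connected and unbalanced, then ⟨H₁⟩ ≅ ⟨H₂⟩ ≅ ⟨H₁ ∩ H₂⟩ ≅ ⟨H₁ ∪ H₂⟩. -/

import Mathlib

open scoped Classical

namespace GR

/-- A finite directed multigraph with edge labels ("gains") in a group `Γ` and a
designated finite set of fixed vertices. -/
structure GainedGraph (V E Γ : Type) where
  tail : E → V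
  head : E → V
  gain : E → Γ
  fixed : Finset V

variable {V E Γ : Type} [DecidableEq V] [DecidableEq E] [Fintype V] [Fintype E] [Group Γ]

/-- A subgraph: a set of vertices and a set of edges whose endpoints lie in the vertex set. -/
structure Subgraph (G : GainedGraph V E Γ) where
  verts : Finset V
  edges : Finset E
  tail_mem : ∀ e ∈ edges, G.tail e ∈ verts
  head_mem : ∀ e ∈ edges, G.head e ∈ verts

namespace Subgraph

variable {G : GainedGraph V E Γ}

instance : Top (Subgraph G) :=
  ⟨⟨Finset.univ, Finset.univ, fun _ _ => Finset.mem_univ _, fun _ _ => Finset.mem_univ _⟩⟩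

instance : LE (Subgraph G) :=
  ⟨fun H K => H.verts ⊆ K.verts ∧ H.edges ⊆ K.edges⟩

def union (H K : Subgraph G) : Subgraph G where
  verts := H.verts ∪ K.verts
  edges := H.edges ∪ K.edges
  tail_mem e he := by
    rcases Finset.mem_union.1 he with h | h
    · exact Finset.mem_union_left _ (H.tail_mem e h)
    · exact Finset.mem_union_right _ (K.tail_mem e h)
  head_mem e he := by
    rcases Finset.mem_union.1 he with h | h
    · exact Finset.mem_union_left _ (H.head_mem e h)
    · exact Finset.mem_union_right _ (K.head_mem e h)

def inter (H K : Subgraph G) : Subgraph G where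
  verts := H.verts ∩ K.verts
  edges := H.edges ∩ K.edges
  tail_mem e he := by
    rcases Finset.mem_inter.1 he with ⟨h1, h2⟩
    exact Finset.mem_inter.2 ⟨H.tail_mem e h1, K.tail_mem e h2⟩
  head_mem e he := by
    rcases Finset.mem_inter.1 he with ⟨h1, h2⟩
    exact Finset.mem_inter.2 ⟨H.head_mem e h1, K.head_mem e h2⟩

/-- Delete a vertex together with all edges incident to it. -/
def deleteVertex (H : Subgraph G) (v : V) : Subgraph G where
  verts := H.verts.erase v
  edges := H.edges.filter fun e => G.tail e ≠ v ∧ G.head e ≠ v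
  tail_mem e he := by
    rcases Finset.mem_filter.1 he with ⟨h1, h2, h3⟩
    exact Finset.mem_erase.2 ⟨h2, H.tail_mem e h1⟩
  head_mem e he := by
    rcases Finset.mem_filter.1 he with ⟨h1, h2, h3⟩
    exact Finset.mem_erase.2 ⟨h3, H.head_mem e h1⟩

/-- Delete an edge. -/
def deleteEdge (H : Subgraph G) (f : E) : Subgraph G where
  verts := H.verts
  edges := H.edges.erase f
  tail_mem e he := H.tail_mem e (Finset.mem_of_mem_erase he)
  head_mem e he := H.head_mem e (Finset.mem_of_mem_erase he)

/-- Add an edge (together with its endpoints). -/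
def addEdge (H : Subgraph G) (f : E) : Subgraph G where
  verts := insert (G.tail f) (insert (G.head f) H.verts)
  edges := insert f H.edges
  tail_mem e he := by
    rcases Finset.mem_insert.1 he with rfl | h
    · exact Finset.mem_insert_self _ _
    · exact Finset.mem_insert_of_mem (Finset.mem_insert_of_mem (H.tail_mem e h))
  head_mem e he := by
    rcases Finset.mem_insert.1 he with rfl | h
    · exact Finset.mem_insert_of_mem (Finset.mem_insert_self _ _)
    · exact Finset.mem_insert_of_mem (Finset.mem_insert_of_mem (H.head_mem e h))

/-- The free vertices of a subgraph. -/
def freeVerts (H : Subgraph G) : Finset V := H.verts \ G.fixed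

/-- The fixed vertices of a subgraph. -/
def fixedVerts (H : Subgraph G) : Finset V := H.verts ∩ G.fixed

end Subgraph

/-- The starting vertex of an oriented traversal of an edge. -/
def stepStart (G : GainedGraph V E Γ) (s : E × Bool) : V :=
  if s.2 then G.tail s.1 else G.head s.1

/-- The ending vertex of an oriented traversal of an edge. -/
def stepEnd (G : GainedGraph V E Γ) (s : E × Bool) : V :=
  if s.2 then G.head s.1 else G.tail s.1

/-- The gain contributed by an oriented traversal of an edge. -/
def stepGain (G : GainedGraph V E Γ) (s : E × Bool) : Γ :=
  if s.2 then G.gain s.1 else (G.gain s.1)⁻¹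

/-- `IsWalk G H L u w` : `L` is a walk in the subgraph `H` from `u` to `w`. -/
def IsWalk (G : GainedGraph V E Γ) (H : Subgraph G) : List (E × Bool) → V → V → Prop
  | [], u, w => u = w ∧ u ∈ H.verts
  | s :: L, u, w => s.1 ∈ H.edges ∧ stepStart G s = u ∧ IsWalk G H L (stepEnd G s) w

/-- The gain of a walk. -/
def walkGain (G : GainedGraph V E Γ) (L : List (E × Bool)) : Γ :=
  (L.map (stepGain G)).prod

/-- The vertices visited by a walk starting at `u`. -/
def walkVerts (G : GainedGraph V E Γ) (u : V) (L : List (E × Bool)) : List V :=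
  u :: L.map (stepEnd G)

/-- `⟨H⟩` : the subgroup of `Γ` generated by the gains of all closed walks in `H`
containing no fixed vertex. -/
def gainGroup (G : GainedGraph V E Γ) (H : Subgraph G) : Subgroup Γ :=
  Subgroup.closure
    {g | ∃ u L, IsWalk G H L u u ∧ (∀ x ∈ walkVerts G u L, x ∉ G.fixed) ∧ walkGain G L = g}

/-- A subgraph is balanced if its gain group is trivial. -/
def Balanced (G : GainedGraph V E Γ) (H : Subgraph G) : Prop := gainGroup G H = ⊥

def Reachable (G : GainedGraph V E Γ) (H : Subgraph G) (u w : V) : Prop :=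
  ∃ L, IsWalk G H L u w

def Connected (G : GainedGraph V E Γ) (H : Subgraph G) : Prop :=
  H.verts.Nonempty ∧ ∀ u ∈ H.verts, ∀ w ∈ H.verts, Reachable G H u w

/-- `v` is a cut-vertex of the subgraph `H`. -/
def IsCutVertex (G : GainedGraph V E Γ) (H : Subgraph G) (v : V) : Prop :=
  v ∈ H.verts ∧ ∃ u ∈ H.verts, ∃ w ∈ H.verts, u ≠ v ∧ w ≠ v ∧
    Reachable G H u w ∧ ¬ Reachable G (H.deleteVertex v) u w

/-- `(2,m,l)`-sparsity of the subgraph `K`. -/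
def Sparse (G : GainedGraph V E Γ) (m l : ℤ) (K : Subgraph G) : Prop :=
  ∀ H : Subgraph G, H ≤ K → H.edges.Nonempty →
    (H.edges.card : ℤ) ≤ 2 * (H.freeVerts.card : ℤ) + m * (H.fixedVerts.card : ℤ) - l

/-- `(2,m,l)`-tightness of the subgraph `K`. -/
def Tight (G : GainedGraph V E Γ) (m l : ℤ) (K : Subgraph G) : Prop :=
  Sparse G m l K ∧
    (K.edges.card : ℤ) = 2 * (K.freeVerts.card : ℤ) + m * (K.fixedVerts.card : ℤ) - l

/-- `(2,m,3,l)`-gain-tightness: `(2,m,l)`-tight and every balanced subgraph with a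
nonempty edge set is `(2,3)`-sparse. -/
def GainTight23 (G : GainedGraph V E Γ) (m l : ℤ) (K : Subgraph G) : Prop :=
  Tight G m l K ∧ ∀ H : Subgraph G, H ≤ K → H.edges.Nonempty → Balanced G H →
    (H.edges.card : ℤ) ≤ 2 * (H.verts.card : ℤ) - 3

/-- The subgraph has no fixed vertex. -/
def NoFixed (G : GainedGraph V E Γ) (H : Subgraph G) : Prop :=
  ∀ x ∈ H.verts, x ∉ G.fixed

/-- Near-balanced with base vertex `v` and gain `δ`: unbalanced, and every closed
walk starting at `v` not containing `v` as an internal vertex has gain `1`, `δ` or `δ⁻¹`. -/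
def NearBalancedAt (G : GainedGraph V E Γ) (H : Subgraph G) (v : V) (δ : Γ) : Prop :=
  ¬ Balanced G H ∧ ∀ L, IsWalk G H L v v →
    (∀ x ∈ (L.map (stepEnd G)).dropLast, x ≠ v) → walkGain G L ∈ ({1, δ, δ⁻¹} : Set Γ)

def NearBalanced (G : GainedGraph V E Γ) (H : Subgraph G) : Prop :=
  NoFixed G H ∧ ∃ v ∈ H.verts, ∃ δ : Γ, NearBalancedAt G H v δ

/-- The gain group of `H` is isomorphic to `ℤ_n`. -/
def IsZIso (G : GainedGraph V E Γ) (H : Subgraph G) (n : ℕ) : Prop :=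
  Nonempty (gainGroup G H ≃* Multiplicative (ZMod n))

def ProperNearBalanced (G : GainedGraph V E Γ) (H : Subgraph G) : Prop :=
  NearBalanced G H ∧ ¬ IsZIso G H 2 ∧ ¬ IsZIso G H 3

/-- The set `S_i(k,j)`. -/
def SSet (k j : ℕ) (i : ℤ) : Set ℕ :=
  {n | 2 ≤ n ∧ n ∣ k ∧ (Odd j → n ≠ 2) ∧ ((j : ZMod n) = (i : ZMod n))}

/-- `H` is `S_i(k,j)`. -/
def IsS (G : GainedGraph V E Γ) (k j : ℕ) (i : ℤ) (H : Subgraph G) : Prop :=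
  ∃ n ∈ SSet k j i, IsZIso G H n

/-- `H` is `S_{±1}(k,j)`. -/
def IsSpm (G : GainedGraph V E Γ) (k j : ℕ) (H : Subgraph G) : Prop :=
  IsS G k j (-1) H ∨ IsS G k j 1 H

/-- The function `α_k^j` on (connected) subgraphs. -/
noncomputable def alpha (G : GainedGraph V E Γ) (k j : ℕ) (X : Subgraph G) : ℤ :=
  if Balanced G X then 0
  else if Odd j ∧ IsZIso G X 2 then 1
  else if IsSpm G k j X then 2 - (X.fixedVerts.card : ℤ)
  else if IsS G k j 0 X ∨ (X.fixedVerts.card = 0 ∧ ProperNearBalanced G X) then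
    2 - 2 * (X.fixedVerts.card : ℤ)
  else 3 - 2 * (X.fixedVerts.card : ℤ)

/-- The subgraph spanned by a set of edges. -/
def edgeSpan (G : GainedGraph V E Γ) (F : Finset E) : Subgraph G where
  verts := F.image G.tail ∪ F.image G.head
  edges := F
  tail_mem e he := Finset.mem_union_left _ (Finset.mem_image_of_mem _ he)
  head_mem e he := Finset.mem_union_right _ (Finset.mem_image_of_mem _ he)

/-- The connected component of the edge `e` in the subgraph spanned by `F`. -/
noncomputable def componentOf (G : GainedGraph V E Γ) (F : Finset E) (e : E) : Subgraph G :=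
  edgeSpan G (F.filter fun f => Reachable G (edgeSpan G F) (G.tail e) (G.tail f))

/-- The connected components of the edge set `F`. -/
noncomputable def components (G : GainedGraph V E Γ) (F : Finset E) : Finset (Subgraph G) :=
  F.image (componentOf G F)

/-- The count `f_k^j(F) = Σ_{X ∈ C(F)} (2|V(X)| − 3 + α_k^j(X))`. -/
noncomputable def fCount (G : GainedGraph V E Γ) (k j : ℕ) (F : Finset E) : ℤ :=
  ∑ X ∈ components G F, (2 * (X.verts.card : ℤ) - 3 + alpha G k j X)

/-- `ℤ_k^j`-gain sparsity. -/
def GainSparseKJ (G : GainedGraph V E Γ) (k j : ℕ) (K : Subgraph G) : Prop :=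
  ∀ H : Subgraph G, H ≤ K → H.edges.Nonempty → (H.edges.card : ℤ) ≤ fCount G k j H.edges

/-- `ℤ_k^j`-gain tightness. -/
def GainTightKJ (G : GainedGraph V E Γ) (k j : ℕ) (K : Subgraph G) : Prop :=
  GainSparseKJ G k j K ∧ (K.edges.card : ℤ) = fCount G k j K.edges

/-- The degree of a vertex in a subgraph (a loop counts twice). -/
def degree (G : GainedGraph V E Γ) (K : Subgraph G) (v : V) : ℕ :=
  (K.edges.filter fun e => G.tail e = v).card + (K.edges.filter fun e => G.head e = v).card

def HasLoopAt (G : GainedGraph V E Γ) (K : Subgraph G) (v : V) : Prop :=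
  ∃ e ∈ K.edges, G.tail e = v ∧ G.head e = v

/-- The neighbours of a vertex in a subgraph. -/
def neighbors (G : GainedGraph V E Γ) (K : Subgraph G) (v : V) : Finset V :=
  ((K.edges.filter fun e => G.tail e = v).image G.head) ∪
    ((K.edges.filter fun e => G.head e = v).image G.tail)

/-- The subgraph `K` satisfies the axioms of a `Γ`-gain graph. -/
structure IsGainGraphOn (G : GainedGraph V E Γ) (K : Subgraph G) : Prop where
  fixed_card : K.fixedVerts.card ≤ 1
  same_dir : ∀ e ∈ K.edges, ∀ f ∈ K.edges, e ≠ f → G.tail e = G.tail f →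
    G.head e = G.head f → G.gain e ≠ G.gain f
  opp_dir : ∀ e ∈ K.edges, ∀ f ∈ K.edges, e ≠ f → G.tail e = G.head f →
    G.head e = G.tail f → G.gain e ≠ (G.gain f)⁻¹
  fixed_not_loop : ∀ e ∈ K.edges, G.tail e = G.head e → G.tail e ∉ G.fixed
  fixed_not_parallel : ∀ e ∈ K.edges, ∀ f ∈ K.edges, e ≠ f →
    (G.tail e ∈ G.fixed ∨ G.head e ∈ G.fixed) →
    ({G.tail e, G.head e} : Finset V) ≠ {G.tail f, G.head f}
  loop_gain : ∀ e ∈ K.edges, G.tail e = G.head e → G.gain e ≠ 1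

/-- `H` together with the vertex `v` and all edges of `G₀` incident to `v`. -/
def addVertexEdges (G : GainedGraph V E Γ) (G₀ H : Subgraph G) (v : V) : Subgraph G where
  verts := (H.verts ∪ {v}) ∪
    ((G₀.edges.filter fun e => G.tail e = v ∨ G.head e = v).image G.tail ∪
      (G₀.edges.filter fun e => G.tail e = v ∨ G.head e = v).image G.head)
  edges := H.edges ∪ G₀.edges.filter fun e => G.tail e = v ∨ G.head e = v
  tail_mem e he := by
    rcases Finset.mem_union.1 he with h | h
    · exact Finset.mem_union_left _ (Finset.mem_union_left _ (H.tail_mem e h))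
    · exact Finset.mem_union_right _ (Finset.mem_union_left _ (Finset.mem_image_of_mem _ h))
  head_mem e he := by
    rcases Finset.mem_union.1 he with h | h
    · exact Finset.mem_union_left _ (Finset.mem_union_left _ (H.head_mem e h))
    · exact Finset.mem_union_right _ (Finset.mem_union_right _ (Finset.mem_image_of_mem _ h))

/-- The result of a 1-reduction at `v` adding the edge `f`: delete `v` and all edges at
`v` and add the edge `f`. -/
def reduceAt (G : GainedGraph V E Γ) (G₀ : Subgraph G) (v : V) (f : E) : Subgraph G where
  verts := insert (G.tail f) (insert (G.head f) (G₀.verts.erase v))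
  edges := insert f (G₀.edges.filter fun e => G.tail e ≠ v ∧ G.head e ≠ v)
  tail_mem e he := by
    rcases Finset.mem_insert.1 he with rfl | h
    · exact Finset.mem_insert_self _ _
    · rcases Finset.mem_filter.1 h with ⟨h1, h2, h3⟩
      exact Finset.mem_insert_of_mem
        (Finset.mem_insert_of_mem (Finset.mem_erase.2 ⟨h2, G₀.tail_mem e h1⟩))
  head_mem e he := by
    rcases Finset.mem_insert.1 he with rfl | h
    · exact Finset.mem_insert_of_mem (Finset.mem_insert_self _ _)
    · rcases Finset.mem_filter.1 h with ⟨h1, h2, h3⟩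
      exact Finset.mem_insert_of_mem
        (Finset.mem_insert_of_mem (Finset.mem_erase.2 ⟨h3, G₀.head_mem e h1⟩))

/-- The new edge `f` arises from a 1-reduction at the vertex `v` of `G₀`: its endpoints are
joined to `v` by two distinct edges of `G₀` and its gain is the gain of the corresponding
path of length two through `v`. -/
def IsOneReduction (G : GainedGraph V E Γ) (G₀ : Subgraph G) (v : V) (f : E) : Prop :=
  f ∉ G₀.edges ∧ G.tail f ≠ v ∧ G.head f ≠ v ∧
    ∃ s₁ s₂ : E × Bool, s₁.1 ∈ G₀.edges ∧ s₂.1 ∈ G₀.edges ∧ s₁.1 ≠ s₂.1 ∧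
      stepEnd G s₁ = v ∧ stepStart G s₂ = v ∧
      G.tail f = stepStart G s₁ ∧ G.head f = stepEnd G s₂ ∧
      G.gain f = stepGain G s₁ * stepGain G s₂

/-- Two labelled edges coincide (up to reorientation with gain inversion). -/
def SameEdge (G : GainedGraph V E Γ) (e f : E) : Prop :=
  (G.tail e = G.tail f ∧ G.head e = G.head f ∧ G.gain e = G.gain f) ∨
    (G.tail e = G.head f ∧ G.head e = G.tail f ∧ G.gain e = (G.gain f)⁻¹)

/-- `H` is a blocker of the 1-reduction at `v` adding the edge `f`. -/
def IsBlocker (G : GainedGraph V E Γ) (k j : ℕ) (G₀ : Subgraph G) (v : V) (f : E)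
    (H : Subgraph G) : Prop :=
  H ≤ G₀ ∧ v ∉ H.verts ∧ G.tail f ∈ H.verts ∧ G.head f ∈ H.verts ∧ H.edges.Nonempty ∧
    Connected G (H.addEdge f) ∧
    (H.edges.card : ℤ) = 2 * (H.verts.card : ℤ) - 3 + alpha G k j (H.addEdge f)

/-- The graph `G` extended by one fresh edge `none` with tail `t`, head `h` and gain `g`. -/
def extendGraph (G : GainedGraph V E Γ) (t h : V) (g : Γ) : GainedGraph V (Option E) Γ where
  tail e := e.elim t G.tail
  head e := e.elim h G.head
  gain e := e.elim g G.gain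
  fixed := G.fixed

/-- The whole original graph `G`, viewed inside the extension. -/
def extendTop (G : GainedGraph V E Γ) (t h : V) (g : Γ) : Subgraph (extendGraph G t h g) where
  verts := Finset.univ
  edges := Finset.univ.image Option.some
  tail_mem _ _ := Finset.mem_univ _
  head_mem _ _ := Finset.mem_univ _

/-- There is an admissible 1-reduction at `v`, i.e. a choice of new edge (with
endpoints and gain coming from a path of length two through `v`) such that the
resulting `Γ`-gain graph is well defined and `ℤ_k^j`-gain tight. -/
def AdmissibleOneReductionExists (G : GainedGraph V E Γ) (k j : ℕ) (v : V) : Prop :=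
  ∃ t h : V, ∃ g : Γ,
    IsOneReduction (extendGraph G t h g) (extendTop G t h g) v none ∧
    IsGainGraphOn (extendGraph G t h g)
      (reduceAt (extendGraph G t h g) (extendTop G t h g) v none) ∧
    GainTightKJ (extendGraph G t h g) k j
      (reduceAt (extendGraph G t h g) (extendTop G t h g) v none)

end GR

/-!
Let `H₁` be near-balanced at `v` with gain `δ`. Since `Γ` is abelian, conjugating by paths
from `v` turns every closed walk of a connected subgraph into one at `v` with the same gain,
and a closed walk at `v` is a product of walks returning to `v` only at their end; hence
`⟨H₁⟩ ≤ ⟨δ⟩`, and since `⟨H₁⟩` is neither `ℤ₂` nor `ℤ₃`, `δ² ≠ 1 ≠ δ³`. If `v` were outside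
`H₁ ∩ H₂`, a closed walk of gain `g` there, conjugated by a path from `v` that does not return
to `v`, would give first returns of gains `g` and `g²`, both in `{1, δ, δ⁻¹}`, so `g = 1`.
Thus `v ∈ H₁ ∩ H₂`, and as the intersection is unbalanced, `δ ∈ ⟨H₁ ∩ H₂⟩`, whence
`⟨H₁ ∩ H₂⟩ = ⟨H₁⟩ = ⟨δ⟩`; being nontrivial inside `⟨H₂⟩ ≅ ℤ_p`, it is also `⟨H₂⟩`. Finally a
closed walk of `H₁ ∪ H₂` switches between `H₁` and `H₂` only at vertices of the connected
intersection, and rerouting through the intersection shows `⟨H₁ ∪ H₂⟩ ≤ ⟨δ⟩`.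
-/

namespace GR

section Walks

variable {V E Γ : Type} {G : GainedGraph V E Γ} {H K : Subgraph G}

lemma stepStart_mem {s : E × Bool} (hs : s.1 ∈ H.edges) : stepStart G s ∈ H.verts := by
  obtain ⟨e, _ | _⟩ := s
  · exact H.head_mem e hs
  · exact H.tail_mem e hs

lemma stepEnd_mem {s : E × Bool} (hs : s.1 ∈ H.edges) : stepEnd G s ∈ H.verts := by
  obtain ⟨e, _ | _⟩ := s
  · exact H.tail_mem e hs
  · exact H.head_mem e hs

lemma IsWalk.start_mem {L : List (E × Bool)} {u w : V} (h : IsWalk G H L u w) :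
    u ∈ H.verts := by
  cases L with
  | nil => exact h.1 ▸ h.2
  | cons s L => exact h.2.1 ▸ stepStart_mem h.1

lemma IsWalk.end_mem {L : List (E × Bool)} {u w : V} (h : IsWalk G H L u w) :
    w ∈ H.verts := by
  induction L generalizing u with
  | nil => exact h.1 ▸ h.2
  | cons s L ih => exact ih h.2.2

lemma IsWalk.mono (hHK : H ≤ K) {L : List (E × Bool)} {u w : V} (h : IsWalk G H L u w) :
    IsWalk G K L u w := by
  induction L generalizing u with
  | nil => exact ⟨h.1, hHK.1 h.2⟩
  | cons s L ih => exact ⟨hHK.2 h.1, h.2.1, ih h.2.2⟩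

lemma IsWalk.append {A B : List (E × Bool)} {u w x : V} (hA : IsWalk G H A u w)
    (hB : IsWalk G H B w x) : IsWalk G H (A ++ B) u x := by
  induction A generalizing u with
  | nil => exact hA.1 ▸ hB
  | cons s A ih => exact ⟨hA.1, hA.2.1, ih hA.2.2⟩

lemma isWalk_singleton {s : E × Bool} (hs : s.1 ∈ H.edges) :
    IsWalk G H [s] (stepStart G s) (stepEnd G s) :=
  ⟨hs, rfl, rfl, stepEnd_mem hs⟩

lemma IsWalk.mem_verts {L : List (E × Bool)} {u w x : V} (h : IsWalk G H L u w)
    (hx : x ∈ L.map (stepEnd G)) : x ∈ H.verts := by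
  induction L generalizing u with
  | nil => cases hx
  | cons s L ih =>
    rcases List.mem_cons.1 hx with rfl | hx
    · exact stepEnd_mem h.1
    · exact ih h.2.2 hx

lemma IsWalk.end_mem_map_stepEnd {L : List (E × Bool)} {u w : V} (h : IsWalk G H L u w)
    (hL : L ≠ []) : w ∈ L.map (stepEnd G) := by
  induction L generalizing u with
  | nil => exact absurd rfl hL
  | cons s L ih =>
    rcases eq_or_ne L [] with rfl | hL
    · simp [h.2.2.1]
    · exact List.mem_cons_of_mem _ (ih h.2.2 hL)

lemma IsWalk.mem_map_stepStart {L : List (E × Bool)} {u w x : V} (h : IsWalk G H L u w)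
    (hx : x ∈ L.map (stepStart G)) : x = u ∨ x ∈ L.map (stepEnd G) := by
  induction L generalizing u with
  | nil => cases hx
  | cons s L ih =>
    rcases List.mem_cons.1 hx with rfl | hx
    · exact .inl h.2.1
    · rcases ih h.2.2 hx with rfl | hx
      · exact .inr List.mem_cons_self
      · exact .inr (List.mem_cons_of_mem _ hx)

def flipStep (s : E × Bool) : E × Bool := (s.1, !s.2)

def revWalk (L : List (E × Bool)) : List (E × Bool) := (L.map flipStep).reverse

@[simp]
lemma stepStart_flipStep (s : E × Bool) : stepStart G (flipStep s) = stepEnd G s := by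
  obtain ⟨e, _ | _⟩ := s <;> rfl

@[simp]
lemma stepEnd_flipStep (s : E × Bool) : stepEnd G (flipStep s) = stepStart G s := by
  obtain ⟨e, _ | _⟩ := s <;> rfl

@[simp]
lemma revWalk_nil : revWalk ([] : List (E × Bool)) = [] := rfl

@[simp]
lemma revWalk_cons (s : E × Bool) (L : List (E × Bool)) :
    revWalk (s :: L) = revWalk L ++ [flipStep s] := by
  simp [revWalk]

lemma IsWalk.reverse {L : List (E × Bool)} {u w : V} (h : IsWalk G H L u w) :
    IsWalk G H (revWalk L) w u := by
  induction L generalizing u with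
  | nil => exact ⟨h.1.symm, h.1 ▸ h.2⟩
  | cons s L ih =>
    rw [revWalk_cons, ← h.2.1, ← stepEnd_flipStep]
    exact (ih h.2.2).append (stepStart_flipStep (G := G) s ▸ isWalk_singleton h.1)

lemma map_stepEnd_revWalk (L : List (E × Bool)) :
    (revWalk L).map (stepEnd G) = (L.map (stepStart G)).reverse := by
  simp [revWalk, Function.comp_def]

lemma IsWalk.mem_of_mem_dropLast_revWalk {L : List (E × Bool)} {u w x : V}
    (h : IsWalk G H L u w) (hx : x ∈ ((revWalk L).map (stepEnd G)).dropLast) :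
    x ∈ L.map (stepEnd G) := by
  cases L with
  | nil => cases hx
  | cons s L =>
    simp only [revWalk_cons, List.map_append, List.map_singleton, List.dropLast_concat,
      map_stepEnd_revWalk, List.mem_reverse] at hx
    rcases h.2.2.mem_map_stepStart hx with rfl | hx
    · exact List.mem_cons_self
    · exact List.mem_cons_of_mem _ hx

variable [Group Γ]

@[simp]
lemma stepGain_flipStep (s : E × Bool) : stepGain G (flipStep s) = (stepGain G s)⁻¹ := by
  obtain ⟨e, _ | _⟩ := s
  · exact (inv_inv _).symm
  · rfl

@[simp]
lemma walkGain_nil : walkGain G [] = 1 := rfl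

@[simp]
lemma walkGain_cons {s : E × Bool} {L : List (E × Bool)} :
    walkGain G (s :: L) = stepGain G s * walkGain G L := by
  simp [walkGain]

@[simp]
lemma walkGain_append {A B : List (E × Bool)} :
    walkGain G (A ++ B) = walkGain G A * walkGain G B := by
  simp [walkGain]

@[simp]
lemma walkGain_revWalk (L : List (E × Bool)) : walkGain G (revWalk L) = (walkGain G L)⁻¹ := by
  induction L with
  | nil => simp
  | cons s L ih => simp [ih]

end Walks

section FirstReturn

variable {V E Γ : Type} {G : GainedGraph V E Γ} {H K : Subgraph G}

lemma forall_map_stepEnd_concat {A : List (E × Bool)} {s : E × Bool} {v : V}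
    (hA : ∀ y ∈ A.map (stepEnd G), y ≠ v) (hs : stepEnd G s ≠ v) :
    ∀ y ∈ (A ++ [s]).map (stepEnd G), y ≠ v := by
  simp only [List.map_append, List.map_singleton, List.mem_append, List.mem_singleton]
  rintro y (hy | rfl)
  exacts [hA y hy, hs]

lemma exists_walk_avoiding_start {v u : V} {L : List (E × Bool)} (hL : IsWalk G H L v u) :
    ∃ P, IsWalk G H P v u ∧ ∀ x ∈ P.map (stepEnd G), x ≠ v := by
  suffices ∀ L x, IsWalk G H L x u → ∀ A, IsWalk G H A v x → (∀ y ∈ A.map (stepEnd G), y ≠ v) →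
      ∃ P, IsWalk G H P v u ∧ ∀ y ∈ P.map (stepEnd G), y ≠ v from
    this L v hL [] ⟨rfl, hL.start_mem⟩ (by simp)
  intro L
  induction L with
  | nil => rintro x ⟨rfl, -⟩ A hA hAv; exact ⟨A, hA, hAv⟩
  | cons s L ih =>
    rintro x ⟨hs, rfl, hL⟩ A hA hAv
    by_cases hsv : stepEnd G s = v
    · exact ih _ hL [] ⟨hsv.symm, hsv ▸ stepEnd_mem hs⟩ (by simp)
    · exact ih _ hL (A ++ [s]) (hA.append (isWalk_singleton hs))
        (forall_map_stepEnd_concat hAv hsv)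

lemma IsWalk.ne_of_mem_dropLast_conj {P W : List (E × Bool)} {v u : V} (hP : IsWalk G H P v u)
    (hPv : ∀ x ∈ P.map (stepEnd G), x ≠ v) (hWv : ∀ x ∈ W.map (stepEnd G), x ≠ v) :
    ∀ x ∈ ((P ++ W ++ revWalk P).map (stepEnd G)).dropLast, x ≠ v := by
  intro x hx
  simp only [List.map_append] at hx
  rw [List.dropLast_append] at hx
  split_ifs at hx
  · rcases List.mem_append.1 (List.dropLast_subset _ hx) with hx | hx
    · exact hPv x hx
    · exact hWv x hx
  · rcases List.mem_append.1 hx with hx | hx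
    · rcases List.mem_append.1 hx with hx | hx
      · exact hPv x hx
      · exact hWv x hx
    · exact hPv x (hP.mem_of_mem_dropLast_revWalk hx)

variable [Group Γ]

def firstReturnGains (H : Subgraph G) (v : V) : Set Γ :=
  {g | ∃ L, IsWalk G H L v v ∧ (∀ x ∈ (L.map (stepEnd G)).dropLast, x ≠ v) ∧ walkGain G L = g}

lemma walkGain_mem_closure_firstReturnGains {v : V} {L : List (E × Bool)}
    (hL : IsWalk G H L v v) : walkGain G L ∈ Subgroup.closure (firstReturnGains H v) := by
  suffices ∀ L u, IsWalk G H L u v → ∀ A, IsWalk G H A v u → (∀ y ∈ A.map (stepEnd G), y ≠ v) →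
      walkGain G A * walkGain G L ∈ Subgroup.closure (firstReturnGains H v) by
    simpa using this L v hL [] ⟨rfl, hL.start_mem⟩ (by simp)
  intro L
  induction L with
  | nil =>
    rintro u ⟨rfl, -⟩ A hA hAv
    obtain rfl : A = [] := by
      by_contra hA₀
      exact hAv u (hA.end_mem_map_stepEnd hA₀) rfl
    simp
  | cons s L ih =>
    rintro u ⟨hs, rfl, hL⟩ A hA hAv
    have hAs : IsWalk G H (A ++ [s]) v (stepEnd G s) := hA.append (isWalk_singleton hs)
    by_cases hsv : stepEnd G s = v
    · have hret : walkGain G (A ++ [s]) ∈ firstReturnGains H v :=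
        ⟨A ++ [s], hsv ▸ hAs, by simpa using hAv, rfl⟩
      have hrest := ih _ hL [] ⟨hsv.symm, hsv ▸ stepEnd_mem hs⟩ (by simp)
      simpa [mul_assoc] using mul_mem (Subgroup.subset_closure hret) hrest
    · simpa [mul_assoc] using ih _ hL (A ++ [s]) hAs (forall_map_stepEnd_concat hAv hsv)

end FirstReturn

section GainGroup

variable {V E Γ : Type} [Group Γ] {G : GainedGraph V E Γ} {H K : Subgraph G}

lemma walkGain_mem_gainGroup (hnf : NoFixed G H) {L : List (E × Bool)} {u : V}
    (h : IsWalk G H L u u) : walkGain G L ∈ gainGroup G H := by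
  refine Subgroup.subset_closure ⟨u, L, h, ?_, rfl⟩
  rintro x (_ | ⟨_, hx⟩)
  · exact hnf _ h.start_mem
  · exact hnf _ (h.mem_verts hx)

lemma gainGroup_mono (hHK : H ≤ K) : gainGroup G H ≤ gainGroup G K := by
  refine Subgroup.closure_mono ?_
  rintro g ⟨u, L, hw, hf, rfl⟩
  exact ⟨u, L, hw.mono hHK, hf, rfl⟩

lemma subgroup_eq_of_le_of_card_prime {A B : Subgroup Γ} {q : ℕ} (hle : A ≤ B) (hA : A ≠ ⊥)
    (hB : Nat.card B = q) (hq : q.Prime) : A = B := by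
  have : Finite B := Nat.finite_of_card_ne_zero (hB ▸ hq.ne_zero)
  rcases hq.eq_one_or_self_of_dvd _ (hB ▸ Subgroup.card_dvd_of_le hle) with h | h
  · exact absurd (Subgroup.card_eq_one.1 h) hA
  · exact Subgroup.eq_of_le_of_card_ge hle (by rw [hB, h])

end GainGroup

section CommGainGroup

variable {V E Γ : Type} [CommGroup Γ] {G : GainedGraph V E Γ} {H K : Subgraph G}

lemma walkGain_conj (P W : List (E × Bool)) :
    walkGain G (P ++ W ++ revWalk P) = walkGain G W := by
  simp

lemma gainGroup_le_closure_firstReturnGains (hc : Connected G H) {v : V} (hv : v ∈ H.verts) :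
    gainGroup G H ≤ Subgroup.closure (firstReturnGains H v) := by
  refine (Subgroup.closure_le _).2 ?_
  rintro g ⟨u, L, hL, -, rfl⟩
  obtain ⟨P, hP⟩ := hc.2 v hv u hL.start_mem
  simpa using
    walkGain_mem_closure_firstReturnGains ((hP.append hL).append hP.reverse)

lemma walkGain_mk_eq {N : Subgroup Γ} (hnf : NoFixed G H) (hN : gainGroup G H ≤ N)
    {P R : List (E × Bool)} {x y : V} (hP : IsWalk G H P x y) (hR : IsWalk G H R x y) :
    (↑(walkGain G P) : Γ ⧸ N) = ↑(walkGain G R) := by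
  rw [QuotientGroup.eq]
  simpa using hN (walkGain_mem_gainGroup hnf (hP.reverse.append hR))

end CommGainGroup

section NearBalanced

variable {V E Γ : Type} {G : GainedGraph V E Γ} {H K : Subgraph G}

lemma eq_one_of_mem_of_sq_mem [Group Γ] {δ g : Γ} (h2 : δ ^ 2 ≠ 1) (h3 : δ ^ 3 ≠ 1)
    (hg : g ∈ ({1, δ, δ⁻¹} : Set Γ)) (hg2 : g ^ 2 ∈ ({1, δ, δ⁻¹} : Set Γ)) : g = 1 := by
  have h1 : δ ≠ 1 := by rintro rfl; exact h2 (one_pow 2)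
  simp only [Set.mem_insert_iff, Set.mem_singleton_iff] at hg hg2
  rcases hg with rfl | rfl | rfl
  · rfl
  · rcases hg2 with h | h | h
    · exact absurd h h2
    · exact absurd (by simpa [pow_two] using h) h1
    · exact absurd (by rw [pow_succ, h, inv_mul_cancel]) h3
  · rcases hg2 with h | h | h
    · exact absurd (by simpa using h) h2
    · exact absurd (by nth_rw 1 [pow_succ', ← h, inv_pow, inv_mul_cancel]) h3
    · exact absurd (by simpa [pow_two] using h) h1

lemma card_multiplicative_zmod (n : ℕ) : Nat.card (Multiplicative (ZMod n)) = n :=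
  (Nat.card_congr Multiplicative.toAdd).trans (Nat.card_zmod n)

lemma IsZIso.card_eq [Group Γ] {n : ℕ} (h : IsZIso G H n) : Nat.card (gainGroup G H) = n :=
  (Nat.card_congr h.some.toEquiv).trans (card_multiplicative_zmod n)

lemma isZIso_of_pow_prime_eq_one [Group Γ] {δ : Γ} (hle : gainGroup G H ≤ Subgroup.zpowers δ)
    (hH : ¬ Balanced G H) {q : ℕ} (hq : q.Prime) (hδ : δ ^ q = 1) : IsZIso G H q := by
  have : Fact q.Prime := ⟨hq⟩
  have hδ1 : δ ≠ 1 := by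
    rintro rfl
    exact hH (le_bot_iff.1 (by simpa using hle))
  have hcard : Nat.card (Subgroup.zpowers δ) = q := by
    rw [Nat.card_zpowers, orderOf_eq_prime hδ hδ1]
  refine ⟨(MulEquiv.subgroupCongr (subgroup_eq_of_le_of_card_prime hle hH hcard hq)).trans
    (mulEquivOfCyclicCardEq ?_)⟩
  rw [hcard, card_multiplicative_zmod]

variable [CommGroup Γ] {v : V} {δ : Γ}

lemma NearBalancedAt.gainGroup_le_zpowers (hnb : NearBalancedAt G H v δ) (hc : Connected G H)
    (hv : v ∈ H.verts) : gainGroup G H ≤ Subgroup.zpowers δ := by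
  refine (gainGroup_le_closure_firstReturnGains hc hv).trans ((Subgroup.closure_le _).2 ?_)
  rintro _ ⟨L, hL, hLv, rfl⟩
  rcases hnb.2 L hL hLv with h | h | h <;> rw [h]
  exacts [one_mem _, Subgroup.mem_zpowers δ, inv_mem (Subgroup.mem_zpowers δ)]

lemma NearBalancedAt.mem_gainGroup (hnb : NearBalancedAt G H v δ) (hKH : K ≤ H)
    (hc : Connected G K) (hv : v ∈ K.verts) (hnf : NoFixed G K) (hK : ¬ Balanced G K) :
    δ ∈ gainGroup G K := by
  by_contra hδ
  refine hK (le_bot_iff.1 ((gainGroup_le_closure_firstReturnGains hc hv).trans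
    ((Subgroup.closure_le _).2 ?_)))
  rintro _ ⟨L, hL, hLv, rfl⟩
  have hmem := walkGain_mem_gainGroup hnf hL
  rcases hnb.2 L (hL.mono hKH) hLv with h | h | h
  · exact h
  · exact absurd (h ▸ hmem) hδ
  · exact absurd (inv_inv δ ▸ inv_mem (h ▸ hmem)) hδ

/-- For a closed walk `W` in `K`, the walks `P W P⁻¹` and `P W W P⁻¹` from `v` return to `v`
only at the end, so both the gain of `W` and its square lie in `{1, δ, δ⁻¹}`. -/
lemma NearBalancedAt.balanced_of_not_mem (hnb : NearBalancedAt G H v δ) (hc : Connected G H)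
    (hv : v ∈ H.verts) (h2 : δ ^ 2 ≠ 1) (h3 : δ ^ 3 ≠ 1) (hKH : K ≤ H) (hvK : v ∉ K.verts) :
    Balanced G K := by
  have key : ∀ u W, IsWalk G K W u u → walkGain G W ∈ ({1, δ, δ⁻¹} : Set Γ) := by
    intro u W hW
    obtain ⟨P₀, hP₀⟩ := hc.2 v hv u (hW.mono hKH).start_mem
    obtain ⟨P, hP, hPv⟩ := exists_walk_avoiding_start hP₀
    have hWv : ∀ x ∈ W.map (stepEnd G), x ≠ v := fun x hx hxv => hvK (hxv ▸ hW.mem_verts hx)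
    rw [← walkGain_conj P W]
    exact hnb.2 _ ((hP.append (hW.mono hKH)).append hP.reverse)
      (hP.ne_of_mem_dropLast_conj hPv hWv)
  refine Subgroup.closure_eq_bot_iff.2 ?_
  rintro _ ⟨u, W, hW, -, rfl⟩
  refine eq_one_of_mem_of_sq_mem h2 h3 (key u W hW) ?_
  simpa [pow_two] using key u (W ++ W) (hW.append hW)

end NearBalanced

namespace Subgraph

variable {V E Γ : Type} [DecidableEq V] [DecidableEq E] {G : GainedGraph V E Γ}
  {H₁ H₂ : Subgraph G}

lemma inter_le_left : H₁.inter H₂ ≤ H₁ := ⟨Finset.inter_subset_left, Finset.inter_subset_left⟩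

lemma inter_le_right : H₁.inter H₂ ≤ H₂ :=
  ⟨Finset.inter_subset_right, Finset.inter_subset_right⟩

lemma left_le_union : H₁ ≤ H₁.union H₂ := ⟨Finset.subset_union_left, Finset.subset_union_left⟩

lemma right_le_union : H₂ ≤ H₁.union H₂ :=
  ⟨Finset.subset_union_right, Finset.subset_union_right⟩

end Subgraph

section Union

variable {V E Γ : Type} [CommGroup Γ] {G : GainedGraph V E Γ} {N : Subgroup Γ}

/-- When the step leaves `H` it starts at a vertex of `K`, and rerouting through `K` does not
change the gain modulo `N`. -/
lemma exists_walk_extend {H H' K : Subgraph G} (hnf : NoFixed G H) (hN : gainGroup G H ≤ N)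
    (hKH : K ≤ H) (hKH' : K ≤ H') (hc : Connected G K)
    (hK : ∀ x ∈ H.verts, x ∈ H'.verts → x ∈ K.verts) {z x : V} (hz : z ∈ K.verts)
    {P : List (E × Bool)} (hP : IsWalk G H P z x) {s : E × Bool}
    (hs : s.1 ∈ H.edges ∨ s.1 ∈ H'.edges) (hsx : stepStart G s = x) :
    ∃ P', (IsWalk G H P' z (stepEnd G s) ∨ IsWalk G H' P' z (stepEnd G s)) ∧
      (↑(walkGain G P') : Γ ⧸ N) = ↑(walkGain G P * stepGain G s) := by
  rcases hs with hs | hs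
  · exact ⟨P ++ [s], .inl (hP.append (hsx ▸ isWalk_singleton hs)), by simp⟩
  · obtain ⟨Q, hQ⟩ := hc.2 z hz x (hK x hP.end_mem (hsx ▸ stepStart_mem hs))
    refine ⟨Q ++ [s], .inr ((hQ.mono hKH').append (hsx ▸ isWalk_singleton hs)), ?_⟩
    simp [walkGain_mk_eq hnf hN (hQ.mono hKH) hP]

variable [DecidableEq V] [DecidableEq E] {H₁ H₂ : Subgraph G}

lemma walkGain_mk_eq_of_isWalk_union (hnf₁ : NoFixed G H₁) (hnf₂ : NoFixed G H₂)
    (hN₁ : gainGroup G H₁ ≤ N) (hN₂ : gainGroup G H₂ ≤ N) (hcI : Connected G (H₁.inter H₂))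
    {z y : V} {Q : List (E × Bool)} (hQ : IsWalk G (H₁.inter H₂) Q z y) {L : List (E × Bool)} :
    ∀ {x P}, IsWalk G (H₁.union H₂) L x y → (IsWalk G H₁ P z x ∨ IsWalk G H₂ P z x) →
      (↑(walkGain G P * walkGain G L) : Γ ⧸ N) = ↑(walkGain G Q) := by
  have hz := hQ.start_mem
  induction L with
  | nil =>
    rintro x P ⟨rfl, -⟩ (hP | hP)
    · simpa using walkGain_mk_eq hnf₁ hN₁ hP (hQ.mono Subgraph.inter_le_left)
    · simpa using walkGain_mk_eq hnf₂ hN₂ hP (hQ.mono Subgraph.inter_le_right)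
  | cons s L ih =>
    rintro x P ⟨hs, hsx, hL⟩ hP
    obtain ⟨P', hP', hgain⟩ := hP.elim
      (fun hP => exists_walk_extend hnf₁ hN₁ Subgraph.inter_le_left Subgraph.inter_le_right hcI
        (fun x h₁ h₂ => Finset.mem_inter.2 ⟨h₁, h₂⟩) hz hP (Finset.mem_union.1 hs) hsx)
      (fun hP => (exists_walk_extend hnf₂ hN₂ Subgraph.inter_le_right Subgraph.inter_le_left hcI
        (fun x h₂ h₁ => Finset.mem_inter.2 ⟨h₁, h₂⟩) hz hP (Finset.mem_union.1 hs).symm hsx).imp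
        fun _ h => ⟨h.1.symm, h.2⟩)
    rw [← ih hL hP']
    simp [hgain, mul_assoc]

lemma gainGroup_union_le (hnf₁ : NoFixed G H₁) (hnf₂ : NoFixed G H₂) (hc₁ : Connected G H₁)
    (hc₂ : Connected G H₂) (hcI : Connected G (H₁.inter H₂)) (hN₁ : gainGroup G H₁ ≤ N)
    (hN₂ : gainGroup G H₂ ≤ N) : gainGroup G (H₁.union H₂) ≤ N := by
  refine (Subgroup.closure_le _).2 ?_
  rintro _ ⟨u, L, hL, -, rfl⟩
  obtain ⟨c, hc⟩ := hcI.1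
  obtain ⟨hc₁', hc₂'⟩ := Finset.mem_inter.1 hc
  obtain ⟨P, hP, hPu⟩ : ∃ P, (IsWalk G H₁ P c u ∨ IsWalk G H₂ P c u) ∧
      IsWalk G (H₁.union H₂) P c u := by
    rcases Finset.mem_union.1 hL.start_mem with hu | hu
    · obtain ⟨P, hP⟩ := hc₁.2 c hc₁' u hu
      exact ⟨P, .inl hP, hP.mono Subgraph.left_le_union⟩
    · obtain ⟨P, hP⟩ := hc₂.2 c hc₂' u hu
      exact ⟨P, .inr hP, hP.mono Subgraph.right_le_union⟩
  have hnil : IsWalk G (H₁.inter H₂) [] c c := ⟨rfl, hc⟩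
  have := walkGain_mk_eq_of_isWalk_union hnf₁ hnf₂ hN₁ hN₂ hcI hnil (hL.append hPu.reverse) hP
  rw [SetLike.mem_coe, ← QuotientGroup.eq_one_iff]
  simpa using this

end Union

theorem proper_near_balanced_union_prime_general {V E : Type} [DecidableEq V] [DecidableEq E]
    (k : ℕ)
    (G : GainedGraph V E (Multiplicative (ZMod k)))
    (H₁ H₂ : Subgraph G)
    (hnf₁ : NoFixed G H₁) (hnf₂ : NoFixed G H₂)
    (hc₁ : Connected G H₁) (hc₂ : Connected G H₂)
    (hpnb : ProperNearBalanced G H₁)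
    (p : ℕ) (hp : p.Prime) (hiso : IsZIso G H₂ p)
    (hcI : Connected G (H₁.inter H₂)) (hunbal : ¬ Balanced G (H₁.inter H₂)) :
    Nonempty (gainGroup G H₁ ≃* gainGroup G H₂) ∧
      Nonempty (gainGroup G H₂ ≃* gainGroup G (H₁.inter H₂)) ∧
      Nonempty (gainGroup G (H₁.inter H₂) ≃* gainGroup G (H₁.union H₂)) := by
  obtain ⟨⟨-, v, hv, δ, hnb⟩, hn₂, hn₃⟩ := hpnb
  have hle₁ : gainGroup G H₁ ≤ Subgroup.zpowers δ := hnb.gainGroup_le_zpowers hc₁ hv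
  have h₂ : δ ^ 2 ≠ 1 := fun h => hn₂ (isZIso_of_pow_prime_eq_one hle₁ hnb.1 Nat.prime_two h)
  have h₃ : δ ^ 3 ≠ 1 := fun h => hn₃ (isZIso_of_pow_prime_eq_one hle₁ hnb.1 Nat.prime_three h)
  have hvI : v ∈ (H₁.inter H₂).verts := by
    by_contra hvI
    exact hunbal (hnb.balanced_of_not_mem hc₁ hv h₂ h₃ Subgraph.inter_le_left hvI)
  have hnfI : NoFixed G (H₁.inter H₂) := fun x hx => hnf₁ x (Finset.mem_inter.1 hx).1
  have hδI : Subgroup.zpowers δ ≤ gainGroup G (H₁.inter H₂) :=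
    Subgroup.zpowers_le.2 (hnb.mem_gainGroup Subgraph.inter_le_left hcI hvI hnfI hunbal)
  have hIH₁ : gainGroup G (H₁.inter H₂) ≤ gainGroup G H₁ := gainGroup_mono Subgraph.inter_le_left
  have hI₁ : gainGroup G (H₁.inter H₂) = gainGroup G H₁ := le_antisymm hIH₁ (hle₁.trans hδI)
  have hIδ : gainGroup G (H₁.inter H₂) = Subgroup.zpowers δ := le_antisymm (hIH₁.trans hle₁) hδI
  have hI₂ : gainGroup G (H₁.inter H₂) = gainGroup G H₂ :=
    subgroup_eq_of_le_of_card_prime (gainGroup_mono Subgraph.inter_le_right) hunbal hiso.card_eq hp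
  have hIU : gainGroup G (H₁.inter H₂) = gainGroup G (H₁.union H₂) := by
    refine le_antisymm (hIH₁.trans (gainGroup_mono Subgraph.left_le_union)) ?_
    rw [hIδ]
    exact gainGroup_union_le hnf₁ hnf₂ hc₁ hc₂ hcI hle₁ (hI₂ ▸ hIδ.le)
  exact ⟨⟨.subgroupCongr (hI₁.symm.trans hI₂)⟩, ⟨.subgroupCongr hI₂.symm⟩, ⟨.subgroupCongr hIU⟩⟩

/-- Let `H₁, H₂` be connected subgraphs with no fixed vertex.  If `H₁`
is proper near-balanced, `⟨H₂⟩ ≅ ℤ_p` for a prime `p`, and `H₁ ∩ H₂` is connected and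
unbalanced, then `⟨H₁⟩ ≅ ⟨H₂⟩ ≅ ⟨H₁ ∩ H₂⟩ ≅ ⟨H₁ ∪ H₂⟩`. -/
theorem proper_near_balanced_union_prime {V E : Type} [DecidableEq V] [DecidableEq E]
    [Fintype V] [Fintype E] (k : ℕ) (hk : 0 < k)
    (G : GainedGraph V E (Multiplicative (ZMod k)))
    (hG : IsGainGraphOn G (⊤ : Subgraph G))
    (H₁ H₂ : Subgraph G)
    (hnf₁ : NoFixed G H₁) (hnf₂ : NoFixed G H₂)
    (hc₁ : Connected G H₁) (hc₂ : Connected G H₂)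
    (hpnb : ProperNearBalanced G H₁)
    (p : ℕ) (hp : p.Prime) (hiso : IsZIso G H₂ p)
    (hcI : Connected G (H₁.inter H₂)) (hunbal : ¬ Balanced G (H₁.inter H₂)) :
    Nonempty (gainGroup G H₁ ≃* gainGroup G H₂) ∧
      Nonempty (gainGroup G H₂ ≃* gainGroup G (H₁.inter H₂)) ∧
      Nonempty (gainGroup G (H₁.inter H₂) ≃* gainGroup G (H₁.union H₂)) :=
  proper_near_balanced_union_prime_general k G H₁ H₂ hnf₁ hnf₂ hc₁ hc₂ hpnb p hp hiso hcI hunbal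

end GR
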